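/- arXiv:1810.12792 — 2 statements merged into one kernel-verified Lean document; each statement's English description precedes it below -/
import Mathlib

section
/- Let q : {0,1}^3 → {0,1} be an affine function over F_2 and q1, q2, q3 : {0,1}^2 → {0,1} be affine functions over F_2 such that q1(b2,b3) ⊕ q2(b1,b3) ⊕ q3(b1,b2) = 0 for all (b1,b2,b3) ∈ {0,1}^3. Then the four equations q(0,0,0) = 0, q(0,1,1) ⊕ q1(1,1) = 1, q(1,0,1) ⊕ q2(1,1) = 1, and q(1,1,0) ⊕ q3(1,1) = 1 cannot all hold simultaneously. -/
/-- An affine function `{0,1}^3 → {0,1}` over `F_2`, in coefficient form. -/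
def IsAffine3 (q : ZMod 2 → ZMod 2 → ZMod 2 → ZMod 2) : Prop :=
  ∃ a0 a1 a2 a3 : ZMod 2, ∀ b1 b2 b3, q b1 b2 b3 = a0 + a1 * b1 + a2 * b2 + a3 * b3

/-- An affine function `{0,1}^2 → {0,1}` over `F_2`, in coefficient form. -/
def IsAffine2 (q : ZMod 2 → ZMod 2 → ZMod 2) : Prop :=
  ∃ a0 a1 a2 : ZMod 2, ∀ b1 b2, q b1 b2 = a0 + a1 * b1 + a2 * b2

theorem stmt0 (q : ZMod 2 → ZMod 2 → ZMod 2 → ZMod 2)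
    (q1 q2 q3 : ZMod 2 → ZMod 2 → ZMod 2)
    (hq : IsAffine3 q) (hq1 : IsAffine2 q1) (hq2 : IsAffine2 q2) (hq3 : IsAffine2 q3)
    (hparity : ∀ b1 b2 b3 : ZMod 2, q1 b2 b3 + q2 b1 b3 + q3 b1 b2 = 0) :
    ¬ (q 0 0 0 = 0 ∧ q 0 1 1 + q1 1 1 = 1 ∧ q 1 0 1 + q2 1 1 = 1 ∧
        q 1 1 0 + q3 1 1 = 1) := by
  obtain ⟨a0, a1, a2, a3, hA⟩ := hq
  obtain ⟨c0, c1, c2, hC⟩ := hq1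
  obtain ⟨d0, d1, d2, hD⟩ := hq2
  obtain ⟨e0, e1, e2, hE⟩ := hq3
  have h000 := hparity 0 0 0
  have h100 := hparity 1 0 0
  have h010 := hparity 0 1 0
  have h001 := hparity 0 0 1
  simp only [hA, hC, hD, hE] at *
  clear hparity
  revert h000 h100 h010 h001
  revert a0 a1 a2 a3 c0 c1 c2 d0 d1 d2 e0 e1 e2
  decide
end

section
/- Suppose q, q1, q2, q3 satisfy the parity identity q1(b2,b3) ⊕ q2(b1,b3) ⊕ q3(b1,b2) = 0 for all inputs, where q1 depends only on (b2,b3), q2 only on (b1,b3), q3 only on (b1,b2), and all four functions together with q : {0,1}^3 → {0,1} are affine over F_2. Then the number of triples (b1,b2,b3) ∈ {(0,0,0),(0,1,1),(1,0,1),(1,1,0)} on which the system of equations {q(0,0,0)=0, q(0,1,1)⊕q1(1,1)=1, q(1,0,1)⊕q2(1,1)=1, q(1,1,0)⊕q3(1,1)=1} is violated is at least 1; equivalently, any assignment satisfies at most 3 of the 4 equations. -/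
/-- At most 3 of the 4 equations can hold simultaneously (equivalently, at least one
of the four listed triples violates its equation). -/
theorem stmt1 (q : ZMod 2 → ZMod 2 → ZMod 2 → ZMod 2)
    (q1 q2 q3 : ZMod 2 → ZMod 2 → ZMod 2)
    (hq : IsAffine3 q) (hq1 : IsAffine2 q1) (hq2 : IsAffine2 q2) (hq3 : IsAffine2 q3)
    (hparity : ∀ b1 b2 b3 : ZMod 2, q1 b2 b3 + q2 b1 b3 + q3 b1 b2 = 0) :
    (if q 0 0 0 = 0 then (1 : ℕ) else 0) +
    (if q 0 1 1 + q1 1 1 = 1 then (1 : ℕ) else 0) +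
    (if q 1 0 1 + q2 1 1 = 1 then (1 : ℕ) else 0) +
    (if q 1 1 0 + q3 1 1 = 1 then (1 : ℕ) else 0) ≤ 3 := by
  obtain ⟨a0, a1, a2, a3, ha⟩ := hq
  obtain ⟨c0, c1, c2, hc⟩ := hq1
  obtain ⟨d0, d1, d2, hd⟩ := hq2
  obtain ⟨e0, e1, e2, he⟩ := hq3
  have h111 := hparity 1 1 1
  simp only [ha, hc, hd, he] at h111 ⊢
  clear ha hc hd he hparity
  revert h111
  revert a0 a1 a2 a3 c0 c1 c2 d0 d1 d2 e0 e1 e2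
  decide
end
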